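/- arXiv:1907.03190 — 9 statements merged into one kernel-verified Lean document; each statement's English description precedes it below -/
import Mathlib

section
/- Let q₁, q₂ be distributions over [n], S = {i ∈ [n] : q₁(i) > q₂(i)}, and suppose q₁(S) > q₂(S). Let ε > 0, let p = (1−α*)q₁ + α*q₂ for some α* ∈ [0,1], and let w ∈ ℝ satisfy |p(S) − w| ≤ ε/4. Define α := (q₁(S) − (w + ε/4)) / (q₁(S) − q₂(S)) and q_α(i) := (1−α)q₁(i) + αq₂(i). Then α ≤ α* and ‖p − q_α‖₁ ≤ ε. -/
open Finset

/-- A distribution over `[n]`: nonnegative values summing to 1. -/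
def IsDist {n : ℕ} (p : Fin n → ℝ) : Prop :=
  (∀ i, 0 ≤ p i) ∧ ∑ i, p i = 1

/-- With `S = {i : q₁(i) > q₂(i)}`, `q₁(S) > q₂(S)`, `p = (1−α*)q₁ + α*q₂`,
and `|p(S) − w| ≤ ε/4`, the estimate `α := (q₁(S) − (w + ε/4)) / (q₁(S) − q₂(S))`
satisfies `α ≤ α*` and `‖p − q_α‖₁ ≤ ε`. -/
theorem stmt2 {n : ℕ} (q₁ q₂ p : Fin n → ℝ)
    (hq₁ : IsDist q₁) (hq₂ : IsDist q₂)
    (S : Finset (Fin n)) (hS : S = Finset.univ.filter fun i => q₂ i < q₁ i)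
    (hSgt : ∑ i ∈ S, q₂ i < ∑ i ∈ S, q₁ i)
    (ε : ℝ) (hε : 0 < ε)
    (αs : ℝ) (hαs0 : 0 ≤ αs) (hαs1 : αs ≤ 1)
    (hp : ∀ i, p i = (1 - αs) * q₁ i + αs * q₂ i)
    (w : ℝ) (hw : |(∑ i ∈ S, p i) - w| ≤ ε / 4)
    (α : ℝ)
    (hα : α = (∑ i ∈ S, q₁ i - (w + ε / 4)) / (∑ i ∈ S, q₁ i - ∑ i ∈ S, q₂ i)) :
    α ≤ αs ∧ ∑ i, |p i - ((1 - α) * q₁ i + α * q₂ i)| ≤ ε := by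
  set A := ∑ i ∈ S, q₁ i with hA
  set B := ∑ i ∈ S, q₂ i with hB
  have hD : 0 < A - B := by linarith
  -- p(S) = A - αs*(A-B)
  have hpS : ∑ i ∈ S, p i = A - αs * (A - B) := by
    have : ∑ i ∈ S, p i = ∑ i ∈ S, ((1 - αs) * q₁ i + αs * q₂ i) := by
      exact Finset.sum_congr rfl fun i _ => hp i
    rw [this, Finset.sum_add_distrib, ← Finset.mul_sum, ← Finset.mul_sum]
    ring
  have hw1 : ∑ i ∈ S, p i - w ≤ ε / 4 := (abs_le.mp hw).2
  have hw2 : -(ε/4) ≤ ∑ i ∈ S, p i - w := (abs_le.mp hw).1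
  -- part 1
  have h1 : α ≤ αs := by
    rw [hα, div_le_iff₀ hD]
    nlinarith
  refine ⟨h1, ?_⟩
  -- αs - α ≤ ε / (2*(A-B))
  have h2 : (αs - α) * (A - B) ≤ ε / 2 := by
    have : α * (A - B) = A - (w + ε/4) := by
      rw [hα]; field_simp
    nlinarith
  have hαnn : 0 ≤ αs - α := by linarith
  -- pointwise
  have hpt : ∀ i, |p i - ((1 - α) * q₁ i + α * q₂ i)| = (αs - α) * |q₁ i - q₂ i| := by
    intro i
    rw [hp i]
    have : (1 - αs) * q₁ i + αs * q₂ i - ((1 - α) * q₁ i + α * q₂ i)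
        = (αs - α) * (q₂ i - q₁ i) := by ring
    rw [this, abs_mul, abs_of_nonneg hαnn, abs_sub_comm]
  -- total variation
  have hsum : ∑ i, |q₁ i - q₂ i| = 2 * (A - B) := by
    have hsplit := Finset.sum_add_sum_compl S fun i => |q₁ i - q₂ i|
    have hSc1 : ∑ i ∈ Sᶜ, q₁ i = 1 - A := by
      have := Finset.sum_add_sum_compl S q₁
      rw [hq₁.2] at this; linarith
    have hSc2 : ∑ i ∈ Sᶜ, q₂ i = 1 - B := by
      have := Finset.sum_add_sum_compl S q₂
      rw [hq₂.2] at this; linarith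
    have e1 : ∑ i ∈ S, |q₁ i - q₂ i| = A - B := by
      rw [hA, hB, ← Finset.sum_sub_distrib]
      refine Finset.sum_congr rfl fun i hi => ?_
      rw [hS, Finset.mem_filter] at hi
      exact abs_of_pos (by linarith [hi.2])
    have e2 : ∑ i ∈ Sᶜ, |q₁ i - q₂ i| = (1 - B) - (1 - A) := by
      rw [← hSc2, ← hSc1, ← Finset.sum_sub_distrib]
      refine Finset.sum_congr rfl fun i hi => ?_
      rw [Finset.mem_compl, hS, Finset.mem_filter] at hi
      push_neg at hi
      have : q₁ i ≤ q₂ i := hi (Finset.mem_univ i)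
      rw [abs_of_nonpos (by linarith)]; ring
    rw [← hsplit, e1, e2]; ring
  calc ∑ i, |p i - ((1 - α) * q₁ i + α * q₂ i)|
      = ∑ i, (αs - α) * |q₁ i - q₂ i| := Finset.sum_congr rfl fun i _ => hpt i
    _ = (αs - α) * (2 * (A - B)) := by rw [← Finset.mul_sum, hsum]
    _ ≤ ε := by nlinarith
end

section
/- Let q_α and q₂ be distributions over [n] with ‖q_α − q₂‖₁ > 0, and for each i ∈ [n] let a(i) := ⌊n·q_α(i)⌋ + ⌊n·|q_α(i) − q₂(i)| / ‖q_α − q₂‖₁⌋ + 1. Define the reshaped distribution q′_α on D = {(i,j) : i ∈ [n], j ∈ {1,…,a(i)}} by q′_α(i,j) = q_α(i)/a(i). Then q′_α(i,j) ≤ 1/n for every (i,j) ∈ D, and the ℓ₂-norm satisfies ‖q′_α‖₂ = (∑_{(i,j)∈D} q′_α(i,j)²)^{1/2} ≤ √(3/n). -/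
open Finset

/-- With `a(i) = ⌊n·q_α(i)⌋ + ⌊n·|q_α(i) − q₂(i)|/‖q_α − q₂‖₁⌋ + 1`, the
reshaped distribution `q′_α(i,j) = q_α(i)/a(i)` on `D = {(i,j) : i ∈ [n], j ∈ [a(i)]}`
satisfies `q′_α(i,j) ≤ 1/n` everywhere, and `‖q′_α‖₂ ≤ √(3/n)`. -/
theorem stmt5 {n : ℕ} (hn : 0 < n) (qα q₂ : Fin n → ℝ)
    (hqα : IsDist qα) (hq₂ : IsDist q₂)
    (hdist : 0 < ∑ i, |qα i - q₂ i|)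
    (a : Fin n → ℕ)
    (ha : ∀ i, a i = ⌊(n : ℝ) * qα i⌋₊ +
        ⌊(n : ℝ) * |qα i - q₂ i| / (∑ j, |qα j - q₂ j|)⌋₊ + 1)
    (q' : (Σ i : Fin n, Fin (a i)) → ℝ)
    (hq' : ∀ i (j : Fin (a i)), q' ⟨i, j⟩ = qα i / a i) :
    (∀ x : (Σ i : Fin n, Fin (a i)), q' x ≤ 1 / n) ∧
      Real.sqrt (∑ x : (Σ i : Fin n, Fin (a i)), q' x ^ 2) ≤ Real.sqrt (3 / n) := by
  have hpos : ∀ i, 0 < a i := by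
    intro i; rw [ha i]; omega
  have key : ∀ i, (n : ℝ) * qα i ≤ (a i : ℝ) := by
    intro i
    have h1 : (n : ℝ) * qα i < ⌊(n : ℝ) * qα i⌋₊ + 1 := Nat.lt_floor_add_one _
    have h2 : (⌊(n : ℝ) * qα i⌋₊ + 1 : ℝ) ≤ (a i : ℝ) := by
      rw [ha i]; push_cast; simp
    linarith
  have hbound : ∀ i, qα i / a i ≤ 1 / n := by
    intro i
    rw [div_le_div_iff₀ (by exact_mod_cast hpos i) (by exact_mod_cast hn)]
    linarith [key i]
  have h1 : ∀ x : (Σ i : Fin n, Fin (a i)), q' x ≤ 1 / n := by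
    rintro ⟨i, j⟩; rw [hq' i j]; exact hbound i
  refine ⟨h1, Real.sqrt_le_sqrt ?_⟩
  have hsum : ∑ x : (Σ i : Fin n, Fin (a i)), q' x ^ 2
      = ∑ i, ∑ j : Fin (a i), (qα i / a i) ^ 2 := by
    rw [← Finset.univ_sigma_univ, Finset.sum_sigma]
    exact Finset.sum_congr rfl fun i _ => Finset.sum_congr rfl fun j _ => by rw [hq' i j]
  rw [hsum]
  have step : ∀ i, ∑ _j : Fin (a i), (qα i / a i) ^ 2 ≤ qα i / n := by
    intro i
    rw [Finset.sum_const, Finset.card_univ, Fintype.card_fin, nsmul_eq_mul]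
    have h0 : (0 : ℝ) < a i := by exact_mod_cast hpos i
    have : (a i : ℝ) * (qα i / a i) ^ 2 = qα i * (qα i / a i) := by
      field_simp
    rw [this]
    calc qα i * (qα i / a i) ≤ qα i * (1 / n) :=
          mul_le_mul_of_nonneg_left (hbound i) (hqα.1 i)
      _ = qα i / n := by ring
  calc ∑ i, ∑ _j : Fin (a i), (qα i / a i) ^ 2 ≤ ∑ i, qα i / n :=
        Finset.sum_le_sum fun i _ => step i
    _ = 1 / n := by rw [← Finset.sum_div, hqα.2]
    _ ≤ 3 / n := by
        have : (0:ℝ) < n := by exact_mod_cast hn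
        gcongr <;> norm_num
end

section
/- Let q₁, q₂ be distributions over [n], let 0 ≤ α ≤ α* ≤ 1 with α < 1, let p = (1−α*)q₁ + α*q₂, and let q_α = (1−α)q₁ + αq₂. Suppose ‖q_α − q₂‖₁ > 0 and ‖p − q_α‖₁ ≤ ε′. For each i ∈ [n] let a(i) := ⌊n·q_α(i)⌋ + ⌊n·|q_α(i) − q₂(i)| / ‖q_α − q₂‖₁⌋ + 1. Then for every i ∈ [n], |p(i) − q_α(i)| / a(i) ≤ ε′/n; equivalently, the reshaped distributions p′(i,j) = p(i)/a(i) and q′_α(i,j) = q_α(i)/a(i) satisfy |p′(i,j) − q′_α(i,j)| ≤ ε′/n for every i ∈ [n] and j ∈ {1,…,a(i)}. -/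
open Finset

/-- If `p = (1−α*)q₁ + α*q₂` with `0 ≤ α ≤ α* ≤ 1`, `α < 1`,
`q_α = (1−α)q₁ + αq₂`, `‖q_α − q₂‖₁ > 0`, `‖p − q_α‖₁ ≤ ε′`, and
`a(i) = ⌊n·q_α(i)⌋ + ⌊n·|q_α(i) − q₂(i)|/‖q_α − q₂‖₁⌋ + 1`, then for every `i`,
`|p(i) − q_α(i)|/a(i) ≤ ε′/n`. -/
theorem stmt7 {n : ℕ} (q₁ q₂ p qα : Fin n → ℝ)
    (hq₁ : IsDist q₁) (hq₂ : IsDist q₂)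
    (α αs : ℝ) (hα0 : 0 ≤ α) (hααs : α ≤ αs) (hαs1 : αs ≤ 1) (hα1 : α < 1)
    (hp : ∀ i, p i = (1 - αs) * q₁ i + αs * q₂ i)
    (hqα : ∀ i, qα i = (1 - α) * q₁ i + α * q₂ i)
    (hdist : 0 < ∑ i, |qα i - q₂ i|)
    (ε' : ℝ) (hclose : ∑ i, |p i - qα i| ≤ ε')
    (a : Fin n → ℕ)
    (ha : ∀ i, a i = ⌊(n : ℝ) * qα i⌋₊ +
        ⌊(n : ℝ) * |qα i - q₂ i| / (∑ j, |qα j - q₂ j|)⌋₊ + 1) :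
    ∀ i, |p i - qα i| / a i ≤ ε' / n := by
  intro i
  have hn : 0 < n := i.pos
  set D := ∑ j, |qα j - q₂ j| with hD
  have h1α : 0 < 1 - α := by linarith
  set c := (αs - α) / (1 - α) with hc
  have hc0 : 0 ≤ c := div_nonneg (by linarith) h1α.le
  have habs : ∀ j, |p j - qα j| = c * |qα j - q₂ j| := by
    intro j
    have hj : p j - qα j = -(c * (qα j - q₂ j)) := by
      rw [hp, hqα, hc]; field_simp; ring
    rw [hj, abs_neg, abs_mul, abs_of_nonneg hc0]
  have hcD : c * D ≤ ε' := by
    have : c * D = ∑ j, |p j - qα j| := by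
      rw [hD, Finset.mul_sum]
      exact Finset.sum_congr rfl fun j _ => (habs j).symm
    linarith [this ▸ hclose]
  have hai : (n : ℝ) * |qα i - q₂ i| / D ≤ (a i : ℝ) := by
    have hlt := Nat.lt_floor_add_one ((n : ℝ) * |qα i - q₂ i| / D)
    have h2 : (⌊(n : ℝ) * |qα i - q₂ i| / D⌋₊ : ℝ) + 1 ≤ (a i : ℝ) := by
      rw [ha i]; push_cast
      have : (0 : ℝ) ≤ (⌊(n : ℝ) * qα i⌋₊ : ℝ) := Nat.cast_nonneg _
      linarith
    linarith
  have hapos : (0 : ℝ) < (a i : ℝ) := by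
    rw [ha i]; push_cast; positivity
  have hnpos : (0 : ℝ) < (n : ℝ) := by exact_mod_cast hn
  rw [div_le_div_iff₀ hapos hnpos]
  have hq : (n : ℝ) * |qα i - q₂ i| ≤ (a i : ℝ) * D := by
    rw [div_le_iff₀ hdist] at hai; linarith
  have := habs i
  nlinarith [abs_nonneg (qα i - q₂ i), hapos.le, mul_le_mul_of_nonneg_right hcD hapos.le]
end

section
/- Let p, q₁, q₂ be distributions over [n], let α ∈ [0,1], let s > 0, and let q_α = (1−α)q₁ + αq₂. On some probability space, let (X_i)_{i∈[n]}, (Y_i)_{i∈[n]}, (Z_i)_{i∈[n]} be mutually independent random variables with X_i ∼ Poisson(s·p(i)), Y_i ∼ Poisson(s·q₁(i)), Z_i ∼ Poisson(s·q₂(i)), and define f := ∑_{i=1}^n (X_i − (1−α)Y_i − αZ_i)² − X_i − (1−α)²Y_i − α²Z_i. Then E[f] = s²·‖p − q_α‖₂², and for any b ≥ max(‖p‖₂², ‖q_α‖₂²), Var(f) ≤ 8 s³ √b · ‖p − q_α‖₄² + 8 s² b. -/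
/-!
For independent `Xⱼ ∼ Poisson(rⱼ)` and weights `wⱼ`, let `L = ∑ wⱼXⱼ`, `G = L² − ∑ wⱼ²Xⱼ`,
`Δ = ∑ wⱼrⱼ` and `σ = ∑ wⱼ²rⱼ`. The moments `E L, E L², E G, E GL, E G²` are fixed polynomials in
`Δ` and `σ`; in particular `E G = Δ²` and `Var G = 4Δ²σ + 2σ²`. For a single variable this comes
from the factorial moments `E[X(X−1)⋯(X−k+1)] = rᵏ`, and the shape survives merging two independent
families because `G_{S ∪ T} = G_S + 2 L_S L_T + G_T`.

`f` is the sum over `i` of such statistics for the independent blocks `(Xᵢ, Yᵢ, Zᵢ)` with weights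
`(1, −(1−α), −α)`, for which `Δᵢ = s(pᵢ − q_α(i))` and `0 ≤ σᵢ ≤ s(pᵢ + q_α(i))`. Summing gives
`E f = s²‖p − q_α‖₂²` and `Var f ≤ ∑ᵢ (4s³(pᵢ − q_α(i))²(pᵢ + q_α(i)) + 2s²(pᵢ + q_α(i))²)`, which
Cauchy–Schwarz and `‖p + q_α‖₂² ≤ 4b` turn into the stated bound.
-/

open Finset MeasureTheory ProbabilityTheory

open Real
open scoped NNReal Nat

lemma Nat.cast_descFactorial_eq_prod_sub (n k : ℕ) :
    (n.descFactorial k : ℝ) = ∏ j ∈ range k, ((n : ℝ) - j) := by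
  induction k with
  | zero => simp
  | succ k ih =>
    rw [Nat.descFactorial_succ, prod_range_succ, ← ih]
    rcases le_or_gt k n with h | h
    · push_cast [h]; ring
    · simp [Nat.descFactorial_of_lt h]

namespace ProbabilityTheory

lemma hasSum_descFactorial_poissonMeasure (r : ℝ≥0) (k : ℕ) :
    HasSum (fun n ↦ exp (-r) * r ^ n / n ! * (n.descFactorial k : ℝ)) ((r : ℝ) ^ k) := by
  rw [← hasSum_nat_add_iff' k, sum_eq_zero fun i hi ↦ by
    simp [Nat.descFactorial_of_lt (mem_range.mp hi)], sub_zero]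
  have h := (hasSum_one_poissonMeasure r).mul_left ((r : ℝ) ^ k)
  rw [mul_one] at h
  refine h.congr_fun fun m ↦ ?_
  have hfac : ((m + k)! : ℝ) = m ! * (m + k).descFactorial k := by
    have h := Nat.factorial_mul_descFactorial (Nat.le_add_left k m)
    rw [Nat.add_sub_cancel] at h
    exact_mod_cast h.symm
  rw [hfac, pow_add]
  field_simp

lemma integrable_descFactorial_poissonMeasure (r : ℝ≥0) (k : ℕ) :
    Integrable (fun n ↦ (n.descFactorial k : ℝ)) (poissonMeasure r) :=
  integrable_poissonMeasure_iff.2 <| by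
    simpa using (hasSum_descFactorial_poissonMeasure r k).summable

lemma integral_descFactorial_poissonMeasure (r : ℝ≥0) (k : ℕ) :
    ∫ n, (n.descFactorial k : ℝ) ∂poissonMeasure r = (r : ℝ) ^ k := by
  rw [integral_poissonMeasure' (integrable_descFactorial_poissonMeasure r k)]
  exact (hasSum_descFactorial_poissonMeasure r k).tsum_eq

section Statistics

variable {ι Ω : Type*}

def linStat (w : ι → ℝ) (W : ι → Ω → ℕ) (J : Finset ι) (ω : Ω) : ℝ :=
  ∑ j ∈ J, w j * W j ω

def quadStat (w : ι → ℝ) (W : ι → Ω → ℕ) (J : Finset ι) (ω : Ω) : ℝ :=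
  linStat w W J ω ^ 2 - ∑ j ∈ J, w j ^ 2 * W j ω

variable [DecidableEq ι] {w : ι → ℝ} {W : ι → Ω → ℕ} {S T : Finset ι}

lemma linStat_union (hST : Disjoint S T) (ω : Ω) :
    linStat w W (S ∪ T) ω = linStat w W S ω + linStat w W T ω :=
  sum_union hST

lemma quadStat_union (hST : Disjoint S T) (ω : Ω) :
    quadStat w W (S ∪ T) ω
      = quadStat w W S ω + 2 * linStat w W S ω * linStat w W T ω + quadStat w W T ω := by
  simp only [quadStat, linStat_union hST, sum_union hST]
  ring

end Statistics

variable {Ω : Type*} [MeasurableSpace Ω] {μ : Measure Ω}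

structure PoissonQuadMoments (μ : Measure Ω) (L G : Ω → ℝ) (Δ σ : ℝ) : Prop where
  integrable_lin : Integrable L μ
  integrable_lin_sq : Integrable (fun ω ↦ L ω ^ 2) μ
  integrable_quad : Integrable G μ
  integrable_quad_mul_lin : Integrable (fun ω ↦ G ω * L ω) μ
  integrable_quad_sq : Integrable (fun ω ↦ G ω ^ 2) μ
  integral_lin : ∫ ω, L ω ∂μ = Δ
  integral_lin_sq : ∫ ω, L ω ^ 2 ∂μ = Δ ^ 2 + σ
  integral_quad : ∫ ω, G ω ∂μ = Δ ^ 2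
  integral_quad_mul_lin : ∫ ω, G ω * L ω ∂μ = Δ ^ 3 + 2 * Δ * σ
  integral_quad_sq : ∫ ω, G ω ^ 2 ∂μ = Δ ^ 4 + 4 * Δ ^ 2 * σ + 2 * σ ^ 2

lemma IndepFun.integrable_and_integral_comp_mul_comp {α β : Type*} [MeasurableSpace α]
    [MeasurableSpace β] {V : Ω → α} {V' : Ω → β} (hind : IndepFun V V' μ) (F : α → ℝ)
    (F' : β → ℝ) (hF : Measurable F) (hF' : Measurable F')
    (hi : Integrable (fun ω ↦ F (V ω)) μ) (hi' : Integrable (fun ω ↦ F' (V' ω)) μ) :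
    Integrable (fun ω ↦ F (V ω) * F' (V' ω)) μ ∧
      ∫ ω, F (V ω) * F' (V' ω) ∂μ = (∫ ω, F (V ω) ∂μ) * ∫ ω, F' (V' ω) ∂μ :=
  ⟨(hind.comp hF hF').integrable_mul hi hi',
    (hind.comp hF hF').integral_fun_mul_eq_mul_integral hi.1 hi'.1⟩

namespace PoissonQuadMoments

variable {L G L' G' : Ω → ℝ} {Δ σ Δ' σ' : ℝ}

lemma zero : PoissonQuadMoments μ (fun _ ↦ 0) (fun _ ↦ 0) 0 0 := by
  constructor <;> simp

lemma of_hasLaw_poissonMeasure {X : Ω → ℕ} {r : ℝ≥0} (hX : HasLaw X (poissonMeasure r) μ) :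
    PoissonQuadMoments μ (fun ω ↦ (X ω : ℝ)) (fun ω ↦ (X ω : ℝ) * (X ω - 1)) r r := by
  set D : ℕ → Ω → ℝ := fun k ω ↦ ((X ω).descFactorial k : ℝ)
  have hint (k : ℕ) : Integrable (D k) μ := by
    have h := integrable_descFactorial_poissonMeasure r k
    rw [← hX.map_eq] at h
    exact (integrable_map_measure Measurable.of_discrete.aestronglyMeasurable
      hX.aemeasurable).1 h
  have hval (k : ℕ) : ∫ ω, D k ω ∂μ = (r : ℝ) ^ k :=
    (hX.integral_comp Measurable.of_discrete.aestronglyMeasurable).trans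
      (integral_descFactorial_poissonMeasure r k)
  have e1 : (fun ω ↦ (X ω : ℝ)) = D 1 := by ext ω; simp [D]
  have e2 : (fun ω ↦ (X ω : ℝ) ^ 2) = fun ω ↦ D 2 ω + D 1 ω := by
    ext ω; simp only [D, Nat.cast_descFactorial_eq_prod_sub, prod_range_succ, prod_range_zero]; ring
  have e3 : (fun ω ↦ (X ω : ℝ) * (X ω - 1)) = D 2 := by
    ext ω; simp only [D, Nat.cast_descFactorial_eq_prod_sub, prod_range_succ, prod_range_zero]; ring
  have e4 : (fun ω ↦ (X ω : ℝ) * (X ω - 1) * X ω) = fun ω ↦ D 3 ω + 2 * D 2 ω := by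
    ext ω; simp only [D, Nat.cast_descFactorial_eq_prod_sub, prod_range_succ, prod_range_zero]; ring
  have e5 : (fun ω ↦ ((X ω : ℝ) * (X ω - 1)) ^ 2) = fun ω ↦ D 4 ω + 4 * D 3 ω + 2 * D 2 ω := by
    ext ω; simp only [D, Nat.cast_descFactorial_eq_prod_sub, prod_range_succ, prod_range_zero]; ring
  have i32 : Integrable (fun ω ↦ D 3 ω + 2 * D 2 ω) μ := (hint 3).add ((hint 2).const_mul 2)
  have i43 : Integrable (fun ω ↦ D 4 ω + 4 * D 3 ω) μ := (hint 4).add ((hint 3).const_mul 4)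
  exact
  { integrable_lin := e1 ▸ hint 1
    integrable_lin_sq := e2 ▸ (hint 2).add (hint 1)
    integrable_quad := e3 ▸ hint 2
    integrable_quad_mul_lin := e4 ▸ i32
    integrable_quad_sq := e5 ▸ i43.add ((hint 2).const_mul 2)
    integral_lin := by rw [e1, hval, pow_one]
    integral_lin_sq := by rw [e2, integral_add (hint 2) (hint 1), hval, hval, pow_one]
    integral_quad := by rw [e3, hval]
    integral_quad_mul_lin := by
      rw [e4, integral_add (hint 3) ((hint 2).const_mul 2), integral_const_mul, hval, hval]; ring
    integral_quad_sq := by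
      rw [e5, integral_add i43 ((hint 2).const_mul 2), integral_add (hint 4) ((hint 3).const_mul 4),
        integral_const_mul, integral_const_mul, hval, hval, hval]; ring }

lemma const_mul (h : PoissonQuadMoments μ L G Δ σ) (c : ℝ) :
    PoissonQuadMoments μ (fun ω ↦ c * L ω) (fun ω ↦ c ^ 2 * G ω) (c * Δ) (c ^ 2 * σ) where
  integrable_lin := h.integrable_lin.const_mul c
  integrable_lin_sq := by simpa [mul_pow] using h.integrable_lin_sq.const_mul (c ^ 2)
  integrable_quad := h.integrable_quad.const_mul _
  integrable_quad_mul_lin := by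
    simpa [mul_mul_mul_comm, ← pow_succ] using h.integrable_quad_mul_lin.const_mul (c ^ 3)
  integrable_quad_sq := by simpa [mul_pow, ← pow_mul] using h.integrable_quad_sq.const_mul (c ^ 4)
  integral_lin := by rw [integral_const_mul, h.integral_lin]
  integral_lin_sq := by simp_rw [mul_pow]; rw [integral_const_mul, h.integral_lin_sq]; ring
  integral_quad := by rw [integral_const_mul, h.integral_quad]; ring
  integral_quad_mul_lin := by
    simp_rw [mul_mul_mul_comm _ (G _), ← pow_succ]
    rw [integral_const_mul, h.integral_quad_mul_lin]; ring
  integral_quad_sq := by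
    simp_rw [mul_pow, ← pow_mul]; rw [integral_const_mul, h.integral_quad_sq]; ring

lemma add (h : PoissonQuadMoments μ L G Δ σ) (h' : PoissonQuadMoments μ L' G' Δ' σ')
    (hind : IndepFun (fun ω ↦ (L ω, G ω)) (fun ω ↦ (L' ω, G' ω)) μ) :
    PoissonQuadMoments μ (fun ω ↦ L ω + L' ω) (fun ω ↦ G ω + 2 * L ω * L' ω + G' ω)
      (Δ + Δ') (σ + σ') := by
  obtain ⟨iL, iL2, iG, iGL, iG2, vL, vL2, vG, vGL, vG2⟩ := h
  obtain ⟨iL', iL2', iG', iGL', iG2', vL', vL2', vG', vGL', vG2'⟩ := h'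
  have prod := hind.integrable_and_integral_comp_mul_comp
  obtain ⟨i1, v1⟩ := prod (·.1) (·.1) (by fun_prop) (by fun_prop) iL iL'
  obtain ⟨i2, v2⟩ := prod (·.2) (·.1) (by fun_prop) (by fun_prop) iG iL'
  obtain ⟨i3, v3⟩ := prod (·.1 ^ 2) (·.1) (by fun_prop) (by fun_prop) iL2 iL'
  obtain ⟨i4, v4⟩ := prod (·.1) (·.1 ^ 2) (by fun_prop) (by fun_prop) iL iL2'
  obtain ⟨i5, v5⟩ := prod (·.1) (·.2) (by fun_prop) (by fun_prop) iL iG'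
  obtain ⟨i6, v6⟩ := prod (·.1 ^ 2) (·.1 ^ 2) (by fun_prop) (by fun_prop) iL2 iL2'
  obtain ⟨i7, v7⟩ := prod (fun v ↦ v.2 * v.1) (·.1) (by fun_prop) (by fun_prop) iGL iL'
  obtain ⟨i8, v8⟩ := prod (·.2) (·.2) (by fun_prop) (by fun_prop) iG iG'
  obtain ⟨i9, v9⟩ := prod (·.1) (fun v ↦ v.2 * v.1) (by fun_prop) (by fun_prop) iL iGL'
  dsimp only at i1 i2 i3 i4 i5 i6 i7 i8 i9 v1 v2 v3 v4 v5 v6 v7 v8 v9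
  have e_lin_sq (ω : Ω) : (L ω + L' ω) ^ 2 = L ω ^ 2 + 2 * (L ω * L' ω) + L' ω ^ 2 := by ring
  have e_quad (ω : Ω) : G ω + 2 * L ω * L' ω + G' ω = G ω + 2 * (L ω * L' ω) + G' ω := by ring
  have e_quad_mul_lin (ω : Ω) : (G ω + 2 * L ω * L' ω + G' ω) * (L ω + L' ω) =
      G ω * L ω + G ω * L' ω + 2 * (L ω ^ 2 * L' ω) + 2 * (L ω * L' ω ^ 2) + L ω * G' ω
        + G' ω * L' ω := by ring
  have e_quad_sq (ω : Ω) : (G ω + 2 * L ω * L' ω + G' ω) ^ 2 =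
      G ω ^ 2 + 4 * (L ω ^ 2 * L' ω ^ 2) + G' ω ^ 2 + 4 * (G ω * L ω * L' ω)
        + 2 * (G ω * G' ω) + 4 * (L ω * (G' ω * L' ω)) := by ring
  refine ⟨by fun_prop, by simp only [e_lin_sq]; fun_prop, by simp only [e_quad]; fun_prop,
    by simp only [e_quad_mul_lin]; fun_prop, by simp only [e_quad_sq]; fun_prop, ?_, ?_, ?_, ?_, ?_⟩
  · simp (disch := fun_prop) only [integral_add, vL, vL']
  · simp (disch := fun_prop) only [e_lin_sq, integral_add, integral_const_mul, v1, vL, vL', vL2,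
      vL2']
    ring
  · simp (disch := fun_prop) only [e_quad, integral_add, integral_const_mul, v1, vL, vL', vG, vG']
    ring
  · simp (disch := fun_prop) only [e_quad_mul_lin, integral_add, integral_const_mul, v2, v3, v4,
      v5, vL, vL', vG, vG', vL2, vL2', vGL, vGL']
    ring
  · simp (disch := fun_prop) only [e_quad_sq, integral_add, integral_const_mul, v6, v7, v8, v9,
      vL, vL', vG, vG', vL2, vL2', vGL, vGL', vG2, vG2']
    ring

lemma memLp_quad (h : PoissonQuadMoments μ L G Δ σ) : MemLp G 2 μ :=
  (memLp_two_iff_integrable_sq h.integrable_quad.1).2 h.integrable_quad_sq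

lemma variance_quad [IsProbabilityMeasure μ] (h : PoissonQuadMoments μ L G Δ σ) :
    variance G μ = 4 * Δ ^ 2 * σ + 2 * σ ^ 2 := by
  rw [variance_eq_sub h.memLp_quad]
  change ∫ ω, G ω ^ 2 ∂μ - (∫ ω, G ω ∂μ) ^ 2 = _
  rw [h.integral_quad_sq, h.integral_quad]
  ring

end PoissonQuadMoments

section Independent

variable {ι : Type*} {W : ι → Ω → ℕ}

lemma iIndepFun.indepFun_linStat_quadStat (w : ι → ℝ) (hmeas : ∀ j, AEMeasurable (W j) μ)
    (hind : iIndepFun W μ) {S T : Finset ι} (hST : Disjoint S T) :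
    IndepFun (fun ω ↦ (linStat w W S ω, quadStat w W S ω))
      (fun ω ↦ (linStat w W T ω, quadStat w W T ω)) μ := by
  let F (J : Finset ι) (v : J → ℕ) : ℝ × ℝ :=
    (∑ j ∈ J.attach, w j * v j, (∑ j ∈ J.attach, w j * v j) ^ 2 - ∑ j ∈ J.attach, w j ^ 2 * v j)
  have hF (J : Finset ι) (ω : Ω) :
      F J (fun j ↦ W j ω) = (linStat w W J ω, quadStat w W J ω) := by
    simp only [F, linStat, quadStat, sum_attach J fun j ↦ w j * (W j ω : ℝ),
      sum_attach J fun j ↦ w j ^ 2 * (W j ω : ℝ)]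
  have := (hind.indepFun_finset₀ S T hST hmeas).comp
    (Measurable.of_discrete (f := F S)) (Measurable.of_discrete (f := F T))
  convert this using 1 <;> funext ω <;> exact (hF _ ω).symm

variable [DecidableEq ι] {r : ι → ℝ≥0} (hind : iIndepFun W μ)
  (hlaw : ∀ j, HasLaw (W j) (poissonMeasure (r j)) μ) (w : ι → ℝ)
include hind hlaw

theorem iIndepFun.poissonQuadMoments_quadStat (J : Finset ι) :
    PoissonQuadMoments μ (linStat w W J) (quadStat w W J)
      (∑ j ∈ J, w j * r j) (∑ j ∈ J, w j ^ 2 * r j) := by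
  induction J using Finset.induction_on with
  | empty =>
    rw [sum_empty, sum_empty]
    convert PoissonQuadMoments.zero (μ := μ) using 1 <;> funext ω <;> simp [linStat, quadStat]
  | insert k J hk ih =>
    have hsingle : PoissonQuadMoments μ (linStat w W {k}) (quadStat w W {k})
        (w k * r k) (w k ^ 2 * r k) := by
      convert (PoissonQuadMoments.of_hasLaw_poissonMeasure (hlaw k)).const_mul (w k) using 1 <;>
        funext ω <;> simp only [linStat, quadStat, sum_singleton]
      ring
    have hdisj : Disjoint {k} J := disjoint_singleton_left.2 hk
    rw [insert_eq, sum_union hdisj, sum_union hdisj, sum_singleton, sum_singleton]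
    convert hsingle.add ih (hind.indepFun_linStat_quadStat w (fun j ↦ (hlaw j).aemeasurable) hdisj)
      using 1 <;> funext ω
    · exact linStat_union hdisj ω
    · exact quadStat_union hdisj ω

theorem iIndepFun.integral_sum_quadStat {κ : Type*} (J : κ → Finset ι) (t : Finset κ) :
    ∫ ω, ∑ i ∈ t, quadStat w W (J i) ω ∂μ = ∑ i ∈ t, (∑ j ∈ J i, w j * r j) ^ 2 := by
  have hmom (i : κ) := hind.poissonQuadMoments_quadStat hlaw w (J i)
  rw [integral_finsetSum _ fun i _ ↦ (hmom i).integrable_quad]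
  exact sum_congr rfl fun i _ ↦ (hmom i).integral_quad

theorem iIndepFun.variance_sum_quadStat {κ : Type*} {J : κ → Finset ι}
    (hJ : Pairwise fun i i' ↦ Disjoint (J i) (J i')) (t : Finset κ) :
    variance (∑ i ∈ t, quadStat w W (J i)) μ = ∑ i ∈ t,
      (4 * (∑ j ∈ J i, w j * r j) ^ 2 * ∑ j ∈ J i, w j ^ 2 * r j
        + 2 * (∑ j ∈ J i, w j ^ 2 * r j) ^ 2) := by
  have := hind.isProbabilityMeasure
  have hmom (i : κ) := hind.poissonQuadMoments_quadStat hlaw w (J i)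
  rw [IndepFun.variance_sum (fun i _ ↦ (hmom i).memLp_quad) fun i _ i' _ hii' ↦
    (hind.indepFun_linStat_quadStat w (fun j ↦ (hlaw j).aemeasurable) (hJ hii')).comp
      measurable_snd measurable_snd]
  exact sum_congr rfl fun i _ ↦ (hmom i).variance_quad

end Independent

end ProbabilityTheory

section Bounds

variable {ι : Type*} (s : Finset ι) {p q : ι → ℝ} {b : ℝ}

lemma sum_add_sq_le_four_mul (hp : ∑ i ∈ s, p i ^ 2 ≤ b) (hq : ∑ i ∈ s, q i ^ 2 ≤ b) :
    ∑ i ∈ s, (p i + q i) ^ 2 ≤ 4 * b :=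
  calc ∑ i ∈ s, (p i + q i) ^ 2 ≤ ∑ i ∈ s, (2 * p i ^ 2 + 2 * q i ^ 2) :=
        sum_le_sum fun i _ ↦ by nlinarith [sq_nonneg (p i - q i)]
    _ ≤ 4 * b := by rw [sum_add_distrib, ← mul_sum, ← mul_sum]; linarith

lemma sum_sq_sub_mul_add_le (hp : ∑ i ∈ s, p i ^ 2 ≤ b) (hq : ∑ i ∈ s, q i ^ 2 ≤ b) :
    ∑ i ∈ s, (p i - q i) ^ 2 * (p i + q i) ≤ 2 * √b * √(∑ i ∈ s, (p i - q i) ^ 4) :=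
  calc ∑ i ∈ s, (p i - q i) ^ 2 * (p i + q i)
      ≤ √(∑ i ∈ s, ((p i - q i) ^ 2) ^ 2) * √(∑ i ∈ s, (p i + q i) ^ 2) :=
        Real.sum_mul_le_sqrt_mul_sqrt s _ _
    _ ≤ √(∑ i ∈ s, (p i - q i) ^ 4) * √(4 * b) := by
        simp_rw [← pow_mul]
        gcongr
        exact sum_add_sq_le_four_mul s hp hq
    _ = 2 * √b * √(∑ i ∈ s, (p i - q i) ^ 4) := by
        rw [Real.sqrt_mul' 4 (le_trans (sum_nonneg fun i _ ↦ sq_nonneg _) hp),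
          show (4 : ℝ) = 2 ^ 2 by norm_num, Real.sqrt_sq zero_le_two]
        ring

lemma sum_four_mul_sq_mul_add_two_mul_sq_le {σ : ι → ℝ} {t : ℝ} (ht : 0 ≤ t)
    (hσ₀ : ∀ i ∈ s, 0 ≤ σ i) (hσ : ∀ i ∈ s, σ i ≤ t * (p i + q i))
    (hp : ∑ i ∈ s, p i ^ 2 ≤ b) (hq : ∑ i ∈ s, q i ^ 2 ≤ b) :
    ∑ i ∈ s, (4 * (t * (p i - q i)) ^ 2 * σ i + 2 * σ i ^ 2)
      ≤ 8 * t ^ 3 * √b * √(∑ i ∈ s, (p i - q i) ^ 4) + 8 * t ^ 2 * b :=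
  calc ∑ i ∈ s, (4 * (t * (p i - q i)) ^ 2 * σ i + 2 * σ i ^ 2)
      ≤ ∑ i ∈ s, (4 * (t * (p i - q i)) ^ 2 * (t * (p i + q i)) + 2 * (t * (p i + q i)) ^ 2) :=
        sum_le_sum fun i hi ↦ by gcongr <;> [exact hσ i hi; exact hσ₀ i hi; exact hσ i hi]
    _ = 4 * t ^ 3 * ∑ i ∈ s, (p i - q i) ^ 2 * (p i + q i)
          + 2 * t ^ 2 * ∑ i ∈ s, (p i + q i) ^ 2 := by
        rw [mul_sum, mul_sum, ← sum_add_distrib]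
        exact sum_congr rfl fun i _ ↦ by ring
    _ ≤ 4 * t ^ 3 * (2 * √b * √(∑ i ∈ s, (p i - q i) ^ 4)) + 2 * t ^ 2 * (4 * b) := by
        gcongr
        exacts [sum_sq_sub_mul_add_le s hp hq, sum_add_sq_le_four_mul s hp hq]
    _ = 8 * t ^ 3 * √b * √(∑ i ∈ s, (p i - q i) ^ 4) + 8 * t ^ 2 * b := by ring

lemma sq_mul_add_sq_mul_le {α x y : ℝ} (hα₀ : 0 ≤ α) (hα₁ : α ≤ 1) (hx : 0 ≤ x) (hy : 0 ≤ y) :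
    (1 - α) ^ 2 * x + α ^ 2 * y ≤ (1 - α) * x + α * y := by
  have h := mul_nonneg hα₀ (sub_nonneg.2 hα₁)
  nlinarith [mul_nonneg h hx, mul_nonneg h hy]

end Bounds

section Blocks

variable {n : ℕ}

def block (i : Fin n) : Finset (Fin 3 × Fin n) :=
  univ ×ˢ {i}

def mixWeight (α : ℝ) (j : Fin 3 × Fin n) : ℝ :=
  ![1, -(1 - α), -α] j.1

lemma pairwise_disjoint_block : Pairwise fun i i' : Fin n ↦ Disjoint (block i) (block i') :=
  fun _ _ h ↦ disjoint_product.2 (Or.inr (disjoint_singleton.2 h))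

lemma sum_block {M : Type*} [AddCommMonoid M] (i : Fin n) (F : Fin 3 × Fin n → M) :
    ∑ j ∈ block i, F j = F (0, i) + F (1, i) + F (2, i) := by
  simp [block, Fin.sum_univ_three]

lemma sum_block_mixWeight_mul (α : ℝ) (x : Fin 3 × Fin n → ℝ) (i : Fin n) :
    ∑ j ∈ block i, mixWeight α j * x j = x (0, i) - (1 - α) * x (1, i) - α * x (2, i) := by
  simp only [sum_block, mixWeight, Matrix.cons_val_zero, Matrix.cons_val_one, Matrix.cons_val]
  ring

lemma sum_block_mixWeight_sq_mul (α : ℝ) (x : Fin 3 × Fin n → ℝ) (i : Fin n) :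
    ∑ j ∈ block i, mixWeight α j ^ 2 * x j
      = x (0, i) + (1 - α) ^ 2 * x (1, i) + α ^ 2 * x (2, i) := by
  simp only [sum_block, mixWeight, Matrix.cons_val_zero, Matrix.cons_val_one, Matrix.cons_val]
  ring

lemma quadStat_mixWeight_block {Ω : Type*} (α : ℝ) (W : Fin 3 × Fin n → Ω → ℕ) (i : Fin n)
    (ω : Ω) :
    quadStat (mixWeight α) W (block i) ω
      = ((W (0, i) ω : ℝ) - (1 - α) * W (1, i) ω - α * W (2, i) ω) ^ 2
        - W (0, i) ω - (1 - α) ^ 2 * W (1, i) ω - α ^ 2 * W (2, i) ω := by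
  rw [quadStat, linStat, sum_block_mixWeight_mul α (fun j ↦ (W j ω : ℝ)),
    sum_block_mixWeight_sq_mul α (fun j ↦ (W j ω : ℝ))]
  ring

end Blocks

theorem stmt9_general {n : ℕ} (p q₁ q₂ qα : Fin n → ℝ)
    (hp : IsDist p) (hq₁ : IsDist q₁) (hq₂ : IsDist q₂)
    (α : ℝ) (hα0 : 0 ≤ α) (hα1 : α ≤ 1)
    (hqα : ∀ i, qα i = (1 - α) * q₁ i + α * q₂ i)
    (s : ℝ) (hs : 0 < s)
    {Ω : Type*} [MeasurableSpace Ω] (μ : Measure Ω)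
    (X Y Z : Fin n → Ω → ℕ)
    (W : Fin 3 × Fin n → Ω → ℕ)
    (hWmeas : ∀ k, Measurable (W k))
    (hW : ∀ i, W (0, i) = X i ∧ W (1, i) = Y i ∧ W (2, i) = Z i)
    (hindep : iIndepFun W μ)
    (hX : ∀ i, μ.map (X i) = poissonMeasure (s * p i).toNNReal)
    (hY : ∀ i, μ.map (Y i) = poissonMeasure (s * q₁ i).toNNReal)
    (hZ : ∀ i, μ.map (Z i) = poissonMeasure (s * q₂ i).toNNReal)
    (f : Ω → ℝ)
    (hf : ∀ ω, f ω = ∑ i, (((X i ω : ℝ) - (1 - α) * (Y i ω : ℝ) - α * (Z i ω : ℝ)) ^ 2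
        - (X i ω : ℝ) - (1 - α) ^ 2 * (Y i ω : ℝ) - α ^ 2 * (Z i ω : ℝ))) :
    (μ[f] = s ^ 2 * ∑ i, (p i - qα i) ^ 2) ∧
    ∀ b : ℝ, max (∑ i, p i ^ 2) (∑ i, qα i ^ 2) ≤ b →
      variance f μ ≤ 8 * s ^ 3 * Real.sqrt b * Real.sqrt (∑ i, (p i - qα i) ^ 4)
        + 8 * s ^ 2 * b := by
  let r : Fin 3 × Fin n → ℝ≥0 := fun j ↦ (s * ![p, q₁, q₂] j.1 j.2).toNNReal
  have hr (i : Fin n) :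
      (r (0, i) : ℝ) = s * p i ∧ (r (1, i) : ℝ) = s * q₁ i ∧ (r (2, i) : ℝ) = s * q₂ i :=
    ⟨Real.coe_toNNReal _ (mul_nonneg hs.le (hp.1 i)),
      Real.coe_toNNReal _ (mul_nonneg hs.le (hq₁.1 i)),
      Real.coe_toNNReal _ (mul_nonneg hs.le (hq₂.1 i))⟩
  have hlaw (j : Fin 3 × Fin n) : HasLaw (W j) (poissonMeasure (r j)) μ := by
    obtain ⟨k, i⟩ := j
    refine ⟨(hWmeas _).aemeasurable, ?_⟩
    fin_cases k
    exacts [(hW i).1 ▸ hX i, (hW i).2.1 ▸ hY i, (hW i).2.2 ▸ hZ i]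
  have hf' : f = ∑ i, quadStat (mixWeight α) W (block i) := funext fun ω ↦ by
    simp only [hf, Finset.sum_apply, quadStat_mixWeight_block, hW]
  have hΔ (i : Fin n) : ∑ j ∈ block i, mixWeight α j * r j = s * (p i - qα i) := by
    rw [sum_block_mixWeight_mul α (fun j ↦ (r j : ℝ)), (hr i).1, (hr i).2.1, (hr i).2.2, hqα]
    ring
  have hσ (i : Fin n) : ∑ j ∈ block i, mixWeight α j ^ 2 * r j ≤ s * (p i + qα i) := by
    rw [sum_block_mixWeight_sq_mul α (fun j ↦ (r j : ℝ)), (hr i).1, (hr i).2.1, (hr i).2.2, hqα]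
    linarith [sq_mul_add_sq_mul_le hα0 hα1 (mul_nonneg hs.le (hq₁.1 i))
      (mul_nonneg hs.le (hq₂.1 i))]
  refine ⟨?_, fun b hb ↦ ?_⟩
  · simp_rw [hf', Finset.sum_apply, hindep.integral_sum_quadStat hlaw _ block, hΔ, mul_pow,
      mul_sum]
  · rw [hf', hindep.variance_sum_quadStat hlaw _ pairwise_disjoint_block]
    simp_rw [hΔ]
    exact sum_four_mul_sq_mul_add_two_mul_sq_le univ hs.le
      (fun i _ ↦ sum_nonneg fun j _ ↦ by positivity) (fun i _ ↦ hσ i)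
      (le_of_max_le_left hb) (le_of_max_le_right hb)

/-- With mutually independent `X_i ∼ Poi(s·p(i))`, `Y_i ∼ Poi(s·q₁(i))`,
`Z_i ∼ Poi(s·q₂(i))` and
`f = ∑ᵢ (Xᵢ − (1−α)Yᵢ − αZᵢ)² − Xᵢ − (1−α)²Yᵢ − α²Zᵢ`, one has
`E[f] = s²‖p − q_α‖₂²` and, for `b ≥ max(‖p‖₂², ‖q_α‖₂²)`,
`Var(f) ≤ 8s³√b·‖p − q_α‖₄² + 8s²b`. -/
theorem stmt9 {n : ℕ} (p q₁ q₂ qα : Fin n → ℝ)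
    (hp : IsDist p) (hq₁ : IsDist q₁) (hq₂ : IsDist q₂)
    (α : ℝ) (hα0 : 0 ≤ α) (hα1 : α ≤ 1)
    (hqα : ∀ i, qα i = (1 - α) * q₁ i + α * q₂ i)
    (s : ℝ) (hs : 0 < s)
    {Ω : Type*} [MeasurableSpace Ω] (μ : Measure Ω) [IsProbabilityMeasure μ]
    (X Y Z : Fin n → Ω → ℕ)
    (W : Fin 3 × Fin n → Ω → ℕ)
    (hWmeas : ∀ k, Measurable (W k))
    (hW : ∀ i, W (0, i) = X i ∧ W (1, i) = Y i ∧ W (2, i) = Z i)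
    (hindep : iIndepFun W μ)
    (hX : ∀ i, μ.map (X i) = poissonMeasure (s * p i).toNNReal)
    (hY : ∀ i, μ.map (Y i) = poissonMeasure (s * q₁ i).toNNReal)
    (hZ : ∀ i, μ.map (Z i) = poissonMeasure (s * q₂ i).toNNReal)
    (f : Ω → ℝ)
    (hf : ∀ ω, f ω = ∑ i, (((X i ω : ℝ) - (1 - α) * (Y i ω : ℝ) - α * (Z i ω : ℝ)) ^ 2
        - (X i ω : ℝ) - (1 - α) ^ 2 * (Y i ω : ℝ) - α ^ 2 * (Z i ω : ℝ))) :
    (μ[f] = s ^ 2 * ∑ i, (p i - qα i) ^ 2) ∧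
    ∀ b : ℝ, max (∑ i, p i ^ 2) (∑ i, qα i ^ 2) ≤ b →
      variance f μ ≤ 8 * s ^ 3 * Real.sqrt b * Real.sqrt (∑ i, (p i - qα i) ^ 4)
        + 8 * s ^ 2 * b :=
  stmt9_general p q₁ q₂ qα hp hq₁ hq₂ α hα0 hα1 hqα s hs μ X Y Z W hWmeas hW hindep hX hY hZ f hf
end

section
/- Let q₁, q₂ be distributions over [n], let b ≥ max(‖q₁‖₂², ‖q₂‖₂²), let c₁, c₂, c₃ > 0, let τ > 0, and let s ≥ max(20000·c₂/c₁², √(20000·c₃)/c₁) · √b/τ. Let R be a real-valued random variable on some probability space with E[R] = c₁ s² ‖q₁ − q₂‖₂² and Var(R) ≤ c₂ s³ ‖q₁ − q₂‖₄² √b + c₃ s² b. Then: (i) if ‖q₁ − q₂‖₂² ≤ τ, then Pr[|R| ≤ 2 c₁ τ s²] ≥ 0.99; and (ii) if ‖q₁ − q₂‖₂² ≥ τ, then Pr[0.9·E[R] ≤ R ≤ 1.1·E[R]] ≥ 0.99. -/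
open Finset MeasureTheory ProbabilityTheory

/-!
Both parts are Chebyshev's inequality. Write `Δ = ‖q₁ − q₂‖₂²`, and note `‖q₁ − q₂‖₄² ≤ Δ`.
For `T = max τ Δ`, the lower bound on `s` makes each of the two terms of the variance bound at
most `(c₁ s² T)² / 20000`, so the standard deviation of `R` is at most `c₁ s² T / 100`.
In case (i) this is `1/100` of the window `c₁ τ s²` around `E[R] ∈ [0, c₁ τ s²]`, and in case (ii)
it is `1/10` of the window `0.1·E[R] = 0.1·c₁ s² Δ`.
-/

lemma IsDist.sum_sq_pos {n : ℕ} {p : Fin n → ℝ} (hp : IsDist p) : 0 < ∑ i, p i ^ 2 := by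
  refine (sum_nonneg fun i _ => sq_nonneg (p i)).lt_of_ne fun h => ?_
  have hzero : ∀ i ∈ univ, p i ^ 2 = 0 :=
    (sum_eq_zero_iff_of_nonneg fun i _ => sq_nonneg (p i)).mp h.symm
  have : ∑ i, p i = 0 := sum_eq_zero fun i hi => pow_eq_zero_iff two_ne_zero |>.mp (hzero i hi)
  simp [hp.2] at this

lemma sqrt_sum_pow_four_le_sum_sq {ι : Type*} (s : Finset ι) (x : ι → ℝ) :
    √(∑ i ∈ s, x i ^ 4) ≤ ∑ i ∈ s, x i ^ 2 := by
  have hsq : ∑ i ∈ s, x i ^ 4 ≤ (∑ i ∈ s, x i ^ 2) ^ 2 := by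
    simpa only [← pow_mul] using sum_sq_le_sq_sum_of_nonneg fun i _ => sq_nonneg (x i)
  exact Real.sqrt_le_left (sum_nonneg fun i _ => sq_nonneg (x i)) |>.mpr hsq

lemma one_sub_variance_div_sq_le_measure {Ω : Type*} [MeasurableSpace Ω] {μ : Measure Ω}
    [IsProbabilityMeasure μ] {X : Ω → ℝ} (hX : MemLp X 2 μ) {t : ℝ} (ht : 0 < t) :
    ENNReal.ofReal (1 - variance X μ / t ^ 2) ≤ μ {ω | |X ω - μ[X]| < t} := by
  have hcover : 1 ≤ μ {ω | t ≤ |X ω - μ[X]|} + μ {ω | |X ω - μ[X]| < t} := by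
    simpa only [measure_univ, Set.compl_ofPred, not_le] using
      measure_univ_le_add_compl (μ := μ) {ω | t ≤ |X ω - μ[X]|}
  rw [ENNReal.ofReal_sub _ (by have := variance_nonneg X μ; positivity), ENNReal.ofReal_one]
  exact tsub_le_iff_left.2 (hcover.trans (add_le_add (meas_ge_le_variance_div_sq hX ht) le_rfl))

lemma ofReal_le_measure_of_variance_le {Ω : Type*} [MeasurableSpace Ω] {μ : Measure Ω}
    [IsProbabilityMeasure μ] {X : Ω → ℝ} (hX : MemLp X 2 μ) {t ε : ℝ} (ht : 0 < t)
    (hvar : variance X μ ≤ ε * t ^ 2) {S : Set Ω} (hS : {ω | |X ω - μ[X]| < t} ⊆ S) :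
    ENNReal.ofReal (1 - ε) ≤ μ S := by
  have hε : 1 - ε ≤ 1 - variance X μ / t ^ 2 := by
    rw [sub_le_sub_iff_left, div_le_iff₀ (by positivity)]
    exact hvar
  exact (ENNReal.ofReal_le_ofReal hε).trans
    ((one_sub_variance_div_sq_le_measure hX ht).trans (measure_mono hS))

lemma add_le_sq_div_of_max_mul_sqrt_le {b c₁ c₂ c₃ τ s Q T : ℝ} (hc₁ : 0 < c₁) (hc₂ : 0 ≤ c₂)
    (hc₃ : 0 ≤ c₃) (hb : 0 ≤ b) (hτ : 0 ≤ τ) (hs : 0 ≤ s)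
    (hsτ : max (20000 * c₂ / c₁ ^ 2) (√(20000 * c₃) / c₁) * √b ≤ s * τ)
    (hQ : Q ≤ T) (hτT : τ ≤ T) :
    c₂ * s ^ 3 * Q * √b + c₃ * s ^ 2 * b ≤ (c₁ * s ^ 2 * T) ^ 2 / 10000 := by
  have hc₂b : 20000 * c₂ * √b ≤ c₁ ^ 2 * (s * τ) := by
    have h := (mul_le_mul_of_nonneg_right (le_max_left _ _) (Real.sqrt_nonneg b)).trans hsτ
    rw [div_mul_eq_mul_div, div_le_iff₀ (by positivity)] at h
    linarith
  have hc₃b : 20000 * c₃ * b ≤ c₁ ^ 2 * (s * τ) ^ 2 := by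
    have h := (mul_le_mul_of_nonneg_right (le_max_right _ _) (Real.sqrt_nonneg b)).trans hsτ
    have h2 := pow_le_pow_left₀ (by positivity) h 2
    rw [mul_pow, div_pow, Real.sq_sqrt (by positivity), Real.sq_sqrt hb, div_mul_eq_mul_div,
      div_le_iff₀ (by positivity)] at h2
    linarith
  have hT : 0 ≤ T := hτ.trans hτT
  calc c₂ * s ^ 3 * Q * √b + c₃ * s ^ 2 * b
      ≤ 20000 * c₂ * √b * (s ^ 3 * T / 20000) + 20000 * c₃ * b * (s ^ 2 / 20000) := by
        have : c₂ * s ^ 3 * Q * √b ≤ c₂ * s ^ 3 * T * √b := by gcongr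
        linarith
    _ ≤ c₁ ^ 2 * (s * τ) * (s ^ 3 * T / 20000) + c₁ ^ 2 * (s * τ) ^ 2 * (s ^ 2 / 20000) := by
        gcongr
    _ ≤ c₁ ^ 2 * (s * T) * (s ^ 3 * T / 20000) + c₁ ^ 2 * (s * T) ^ 2 * (s ^ 2 / 20000) := by
        gcongr
    _ = (c₁ * s ^ 2 * T) ^ 2 / 10000 := by ring

theorem stmt11_general {n : ℕ} (q₁ q₂ : Fin n → ℝ) (hq₁ : IsDist q₁)
    (b c₁ c₂ c₃ τ s : ℝ)
    (hb : max (∑ i, q₁ i ^ 2) (∑ i, q₂ i ^ 2) ≤ b)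
    (hc₁ : 0 < c₁) (hc₂ : 0 < c₂) (hc₃ : 0 < c₃) (hτ : 0 < τ)
    (hs : max (20000 * c₂ / c₁ ^ 2) (Real.sqrt (20000 * c₃) / c₁) * Real.sqrt b / τ ≤ s)
    {Ω : Type*} [MeasurableSpace Ω] (μ : Measure Ω) [IsProbabilityMeasure μ]
    (R : Ω → ℝ) (hR : MemLp R 2 μ)
    (hmean : μ[R] = c₁ * s ^ 2 * ∑ i, (q₁ i - q₂ i) ^ 2)
    (hvar : variance R μ ≤ c₂ * s ^ 3 * Real.sqrt (∑ i, (q₁ i - q₂ i) ^ 4) * Real.sqrt b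
        + c₃ * s ^ 2 * b) :
    ((∑ i, (q₁ i - q₂ i) ^ 2 ≤ τ →
        ENNReal.ofReal 0.99 ≤ μ {ω | |R ω| ≤ 2 * c₁ * τ * s ^ 2}) ∧
      (τ ≤ ∑ i, (q₁ i - q₂ i) ^ 2 →
        ENNReal.ofReal 0.99 ≤ μ {ω | 0.9 * μ[R] ≤ R ω ∧ R ω ≤ 1.1 * μ[R]})) := by
  set Δ := ∑ i, (q₁ i - q₂ i) ^ 2
  have hb0 : 0 < b := hq₁.sum_sq_pos.trans_le ((le_max_left _ _).trans hb)
  have hsτ := (div_le_iff₀ hτ).mp hs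
  have hs0 : 0 < s := lt_of_lt_of_le (by positivity) hs
  have hvarT : ∀ T, Δ ≤ T → τ ≤ T → variance R μ ≤ (c₁ * s ^ 2 * T) ^ 2 / 10000 :=
    fun T hΔT hτT => hvar.trans <| add_le_sq_div_of_max_mul_sqrt_le hc₁ hc₂.le hc₃.le hb0.le hτ.le hs0.le hsτ
      ((sqrt_sum_pow_four_le_sum_sq _ _).trans hΔT) hτT
  have h99 : ENNReal.ofReal 0.99 = ENNReal.ofReal (1 - 0.01) := by norm_num
  refine ⟨fun hΔτ => ?_, fun hτΔ => ?_⟩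
  · rw [h99]
    refine ofReal_le_measure_of_variance_le hR (by positivity : 0 < c₁ * τ * s ^ 2)
      ((hvarT τ hΔτ le_rfl).trans (by nlinarith [sq_nonneg (c₁ * τ * s ^ 2)])) fun ω hω => ?_
    have hE : μ[R] ≤ c₁ * s ^ 2 * τ := by rw [hmean]; gcongr
    have hE0 : 0 ≤ μ[R] := by rw [hmean]; positivity
    simp only [Set.mem_ofPred_eq, abs_lt, abs_le] at hω ⊢
    constructor <;> linarith
  · rw [h99]
    have hΔ0 : 0 < Δ := hτ.trans_le hτΔ
    refine ofReal_le_measure_of_variance_le hR (by positivity : 0 < 0.1 * (c₁ * s ^ 2 * Δ))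
      ((hvarT Δ le_rfl hτΔ).trans_eq (by ring)) fun ω hω => ?_
    simp only [Set.mem_ofPred_eq, abs_lt, hmean] at hω ⊢
    constructor <;> linarith

/-- concentration of a statistic `R` with
`E[R] = c₁s²‖q₁−q₂‖₂²` and `Var(R) ≤ c₂s³‖q₁−q₂‖₄²√b + c₃s²b`, for
`s ≥ max(20000c₂/c₁², √(20000c₃)/c₁)·√b/τ`:
(i) if `‖q₁−q₂‖₂² ≤ τ` then `Pr[|R| ≤ 2c₁τs²] ≥ 0.99`;
(ii) if `‖q₁−q₂‖₂² ≥ τ` then `Pr[0.9·E[R] ≤ R ≤ 1.1·E[R]] ≥ 0.99`. -/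
theorem stmt11 {n : ℕ} (q₁ q₂ : Fin n → ℝ) (hq₁ : IsDist q₁) (hq₂ : IsDist q₂)
    (b c₁ c₂ c₃ τ s : ℝ)
    (hb : max (∑ i, q₁ i ^ 2) (∑ i, q₂ i ^ 2) ≤ b)
    (hc₁ : 0 < c₁) (hc₂ : 0 < c₂) (hc₃ : 0 < c₃) (hτ : 0 < τ)
    (hs : max (20000 * c₂ / c₁ ^ 2) (Real.sqrt (20000 * c₃) / c₁) * Real.sqrt b / τ ≤ s)
    {Ω : Type*} [MeasurableSpace Ω] (μ : Measure Ω) [IsProbabilityMeasure μ]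
    (R : Ω → ℝ) (hR : MemLp R 2 μ)
    (hmean : μ[R] = c₁ * s ^ 2 * ∑ i, (q₁ i - q₂ i) ^ 2)
    (hvar : variance R μ ≤ c₂ * s ^ 3 * Real.sqrt (∑ i, (q₁ i - q₂ i) ^ 4) * Real.sqrt b
        + c₃ * s ^ 2 * b) :
    ((∑ i, (q₁ i - q₂ i) ^ 2 ≤ τ →
        ENNReal.ofReal 0.99 ≤ μ {ω | |R ω| ≤ 2 * c₁ * τ * s ^ 2}) ∧
      (τ ≤ ∑ i, (q₁ i - q₂ i) ^ 2 →
        ENNReal.ofReal 0.99 ≤ μ {ω | 0.9 * μ[R] ≤ R ω ∧ R ω ≤ 1.1 * μ[R]})) :=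
  stmt11_general q₁ q₂ hq₁ b c₁ c₂ c₃ τ s hb hc₁ hc₂ hc₃ hτ hs μ R hR hmean hvar
end

section
/- Let p and q be distributions over [n] and let 𝒟 be a partition of [n] into finitely many disjoint nonempty subsets. Then ‖p − q‖₁ ≤ ∑_{D∈𝒟} |p(D) − q(D)| + ∑_{D∈𝒟} ‖p_{|D} − q_{|D}‖₁ · min(p(D), q(D)), where for each D with p(D) > 0 and q(D) > 0, ‖p_{|D} − q_{|D}‖₁ = ∑_{x∈D} |p(x)/p(D) − q(x)/q(D)|, and by convention ‖p_{|D} − q_{|D}‖₁ = 0 whenever p(D) = 0 or q(D) = 0. -/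
open Finset
open scoped Classical

/-!
Write `P = p(D)`, `Q = q(D)` and `m = min P Q`. On each block `D`,
`p x - q x = m (p x / P - q x / Q) + (P - m) (p x / P) - (Q - m) (q x / Q)`,
and the last two terms are nonnegative with total mass at most `(P - m) + (Q - m) = |P - Q|`.
Summing the triangle inequality over `D` and then over the blocks gives the bound.
-/

section Block

variable {ι : Type*} {p q : ι → ℝ} {D : Finset ι}

/-- Also true when `p(D) = 0`, where `p x / p(D)` is the junk value `0` but `p x = 0` on `D`. -/
theorem sum_mul_div_sum_cancel (hp : ∀ x ∈ D, 0 ≤ p x) {x : ι} (hx : x ∈ D) :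
    (∑ y ∈ D, p y) * (p x / ∑ y ∈ D, p y) = p x := by
  by_cases h : ∑ y ∈ D, p y = 0
  · rw [h, zero_mul, (sum_eq_zero_iff_of_nonneg hp).1 h x hx]
  · exact mul_div_cancel₀ _ h

theorem sum_div_sum_le_one : ∑ x ∈ D, p x / ∑ y ∈ D, p y ≤ 1 := by
  rw [← sum_div]
  exact div_self_le_one _

theorem sum_abs_sub_le_abs_sum_sub_add_min_mul (hp : ∀ x ∈ D, 0 ≤ p x)
    (hq : ∀ x ∈ D, 0 ≤ q x) :
    ∑ x ∈ D, |p x - q x| ≤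
      |(∑ x ∈ D, p x) - ∑ x ∈ D, q x| +
        min (∑ x ∈ D, p x) (∑ x ∈ D, q x) *
          ∑ x ∈ D, |p x / (∑ y ∈ D, p y) - q x / (∑ y ∈ D, q y)| := by
  set P := ∑ x ∈ D, p x
  set Q := ∑ x ∈ D, q x
  set m := min P Q
  have hPm : 0 ≤ P - m := sub_nonneg.2 (min_le_left P Q)
  have hQm : 0 ≤ Q - m := sub_nonneg.2 (min_le_right P Q)
  have pointwise : ∀ x ∈ D, |p x - q x| ≤
      m * |p x / P - q x / Q| + (P - m) * (p x / P) + (Q - m) * (q x / Q) := by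
    intro x hx
    have hpx : P * (p x / P) = p x := sum_mul_div_sum_cancel hp hx
    have hqx : Q * (q x / Q) = q x := sum_mul_div_sum_cancel hq hx
    have hm : 0 ≤ m := le_min (sum_nonneg hp) (sum_nonneg hq)
    have hpP : 0 ≤ (P - m) * (p x / P) := mul_nonneg hPm (div_nonneg (hp x hx) (sum_nonneg hp))
    have hqQ : 0 ≤ (Q - m) * (q x / Q) := mul_nonneg hQm (div_nonneg (hq x hx) (sum_nonneg hq))
    have hdecomp : p x - q x =
        m * (p x / P - q x / Q) + (P - m) * (p x / P) - (Q - m) * (q x / Q) := by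
      linear_combination -hpx + hqx
    have hma : |m * (p x / P - q x / Q)| = m * |p x / P - q x / Q| := by
      rw [abs_mul, abs_of_nonneg hm]
    rw [hdecomp, ← hma, abs_le]
    constructor <;> linarith [neg_abs_le (m * (p x / P - q x / Q)),
      le_abs_self (m * (p x / P - q x / Q))]
  have hmass : (P - m) + (Q - m) = |P - Q| := by
    rw [← max_sub_min_eq_abs']
    linarith [min_add_max P Q]
  calc ∑ x ∈ D, |p x - q x|
      ≤ ∑ x ∈ D, (m * |p x / P - q x / Q| + (P - m) * (p x / P) + (Q - m) * (q x / Q)) :=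
        sum_le_sum pointwise
    _ = m * ∑ x ∈ D, |p x / P - q x / Q| + (P - m) * ∑ x ∈ D, p x / P +
          (Q - m) * ∑ x ∈ D, q x / Q := by
        simp only [sum_add_distrib, mul_sum]
    _ ≤ m * ∑ x ∈ D, |p x / P - q x / Q| + (P - m) * 1 + (Q - m) * 1 := by
        gcongr
        · exact sum_div_sum_le_one
        · exact sum_div_sum_le_one
    _ = |P - Q| + m * ∑ x ∈ D, |p x / P - q x / Q| := by linarith

end Block

theorem ite_mul_min_eq_min_mul {P Q S : ℝ} (hP : 0 ≤ P) (hQ : 0 ≤ Q) :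
    (if P = 0 ∨ Q = 0 then 0 else S) * min P Q = min P Q * S := by
  split_ifs with h
  · rcases h with h | h <;> simp [h, hP, hQ]
  · ring

theorem stmt13_general {n : ℕ} (p q : Fin n → ℝ) (hp : IsDist p) (hq : IsDist q)
    (𝒟 : Finset (Finset (Fin n)))
    (hdisj : (𝒟 : Set (Finset (Fin n))).PairwiseDisjoint id)
    (hcover : ∀ i : Fin n, ∃ D ∈ 𝒟, i ∈ D) :
    ∑ i, |p i - q i| ≤
      (∑ D ∈ 𝒟, |(∑ x ∈ D, p x) - ∑ x ∈ D, q x|) +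
        ∑ D ∈ 𝒟,
          (if (∑ x ∈ D, p x) = 0 ∨ (∑ x ∈ D, q x) = 0 then 0
            else ∑ x ∈ D, |p x / (∑ y ∈ D, p y) - q x / (∑ y ∈ D, q y)|) *
            min (∑ x ∈ D, p x) (∑ x ∈ D, q x) := by
  have huniv : (univ : Finset (Fin n)) = 𝒟.biUnion id := by
    ext i
    simpa using hcover i
  rw [huniv, sum_biUnion hdisj, ← sum_add_distrib]
  refine sum_le_sum fun D _ => ?_
  have hpD : ∀ x ∈ D, 0 ≤ p x := fun x _ => hp.1 x
  have hqD : ∀ x ∈ D, 0 ≤ q x := fun x _ => hq.1 x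
  rw [ite_mul_min_eq_min_mul (sum_nonneg hpD) (sum_nonneg hqD)]
  exact sum_abs_sub_le_abs_sum_sub_add_min_mul hpD hqD

/-- For a partition `𝒟` of `[n]`,
`‖p − q‖₁ ≤ ∑_{D∈𝒟} |p(D) − q(D)| + ∑_{D∈𝒟} ‖p_{|D} − q_{|D}‖₁·min(p(D), q(D))`,
with the convention that `‖p_{|D} − q_{|D}‖₁ = 0` when `p(D) = 0` or `q(D) = 0`. -/
theorem stmt13 {n : ℕ} (p q : Fin n → ℝ) (hp : IsDist p) (hq : IsDist q)
    (𝒟 : Finset (Finset (Fin n)))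
    (hne : ∀ D ∈ 𝒟, D.Nonempty)
    (hdisj : (𝒟 : Set (Finset (Fin n))).PairwiseDisjoint id)
    (hcover : ∀ i : Fin n, ∃ D ∈ 𝒟, i ∈ D) :
    ∑ i, |p i - q i| ≤
      (∑ D ∈ 𝒟, |(∑ x ∈ D, p x) - ∑ x ∈ D, q x|) +
        ∑ D ∈ 𝒟,
          (if (∑ x ∈ D, p x) = 0 ∨ (∑ x ∈ D, q x) = 0 then 0
            else ∑ x ∈ D, |p x / (∑ y ∈ D, p y) - q x / (∑ y ∈ D, q y)|) *
            min (∑ x ∈ D, p x) (∑ x ∈ D, q x) :=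
  stmt13_general p q hp hq 𝒟 hdisj hcover
end

section
/- Let q and r be distributions over [n], let α ∈ [0,1], let ε ≥ 0, and let p = (1−α)q + αr. Let D ⊆ [n] be nonempty and suppose: q(x) > 0 for all x ∈ D, q(y) ≤ (1+ε)·q(x) for all x, y ∈ D, r is constant on D, and p(D) > 0. Then the restriction p_{|D} satisfies |p_{|D}(x) − 1/|D|| ≤ ε/|D| for every x ∈ D; consequently ∑_{x∈D} |p_{|D}(x) − 1/|D|| ≤ ε and (∑_{x∈D} (p_{|D}(x) − 1/|D|)²)^{1/2} ≤ ε/√|D|. -/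
/-!
A mixture of a function that is nearly constant on `D` with one that is constant on `D` is
again nearly constant there: `p y ≤ (1 + ε) p x` for `x, y ∈ D`. Summing over `y` (resp. `x`)
gives `|D| p x ≤ (1 + ε) p(D)` and `p(D) ≤ (1 + ε) |D| p x`, so `|D| p_{|D}(x)` lies in
`[1/(1+ε), 1+ε] ⊆ [1-ε, 1+ε]`. The ℓ₁ and ℓ₂ bounds follow by summing the pointwise bound.
-/

open Finset

lemma mixture_le_one_add_mul {a b c α ε : ℝ} (hα0 : 0 ≤ α) (hα1 : α ≤ 1) (hε : 0 ≤ ε)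
    (hac : a ≤ (1 + ε) * c) (hb : 0 ≤ b) :
    (1 - α) * a + α * b ≤ (1 + ε) * ((1 - α) * c + α * b) := by
  nlinarith [mul_le_mul_of_nonneg_left hac (sub_nonneg.mpr hα1), mul_nonneg hε (mul_nonneg hα0 hb)]

section NearlyUniform

variable {ι : Type*} {s : Finset ι} {f g : ι → ℝ} {ε : ℝ}

lemma abs_div_sum_sub_inv_card_le (hε : 0 ≤ ε) (hf : 0 < ∑ y ∈ s, f y)
    (hratio : ∀ x ∈ s, ∀ y ∈ s, f y ≤ (1 + ε) * f x) {x : ι} (hx : x ∈ s) :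
    |f x / ∑ y ∈ s, f y - 1 / #s| ≤ ε / #s := by
  have hcard : (0 : ℝ) < #s := by exact_mod_cast card_pos.mpr ⟨x, hx⟩
  have hupper : #s * f x ≤ (1 + ε) * ∑ y ∈ s, f y := by
    simpa [mul_sum] using card_nsmul_le_sum s (fun y => (1 + ε) * f y) (f x) (hratio · · x hx)
  have hlower : ∑ y ∈ s, f y ≤ (1 + ε) * (#s * f x) := by
    simpa [mul_left_comm] using sum_le_card_nsmul s f ((1 + ε) * f x) (hratio x hx)
  set S := ∑ y ∈ s, f y
  -- `S / (1 + ε) ≥ (1 - ε) S` because `(1 - ε)(1 + ε) ≤ 1`.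
  have hdev : |#s * f x - S| ≤ ε * S := by
    rw [abs_le]
    constructor <;> nlinarith [mul_nonneg (mul_nonneg hε hε) hf.le]
  have hrewrite : f x / S - 1 / #s = (#s * f x - S) / (#s * S) := by
    field_simp
  rw [hrewrite, abs_div, abs_of_pos (mul_pos hcard hf), div_le_div_iff₀ (mul_pos hcard hf) hcard]
  nlinarith

lemma sum_abs_le_of_forall_abs_le_div_card (hε : 0 ≤ ε) (h : ∀ x ∈ s, |g x| ≤ ε / #s) :
    ∑ x ∈ s, |g x| ≤ ε := by
  calc ∑ x ∈ s, |g x| ≤ #s • (ε / #s) := sum_le_card_nsmul s _ _ h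
    _ ≤ ε := by
      rcases s.eq_empty_or_nonempty with rfl | hs
      · simpa using hε
      · have : (#s : ℝ) ≠ 0 := by exact_mod_cast hs.card_pos.ne'
        rw [nsmul_eq_mul, mul_div_cancel₀ _ this]

lemma sqrt_sum_sq_le_of_forall_abs_le_div_card (hε : 0 ≤ ε) (h : ∀ x ∈ s, |g x| ≤ ε / #s) :
    Real.sqrt (∑ x ∈ s, g x ^ 2) ≤ ε / Real.sqrt #s := by
  have hsq : ∑ x ∈ s, g x ^ 2 ≤ ε ^ 2 / #s :=
    calc ∑ x ∈ s, g x ^ 2 = ∑ x ∈ s, |g x| * |g x| := by simp [← sq]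
      _ ≤ ∑ x ∈ s, ε / #s * |g x| :=
        sum_le_sum fun x hx => mul_le_mul_of_nonneg_right (h x hx) (abs_nonneg _)
      _ = ε / #s * ∑ x ∈ s, |g x| := by rw [mul_sum]
      _ ≤ ε / #s * ε := by
        gcongr
        exact sum_abs_le_of_forall_abs_le_div_card hε h
      _ = ε ^ 2 / #s := by ring
  calc Real.sqrt (∑ x ∈ s, g x ^ 2) ≤ Real.sqrt (ε ^ 2 / #s) := Real.sqrt_le_sqrt hsq
    _ = ε / Real.sqrt #s := by rw [Real.sqrt_div (sq_nonneg ε), Real.sqrt_sq hε]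

end NearlyUniform

theorem stmt14_general {n : ℕ} (q r p : Fin n → ℝ)
    (hr : IsDist r)
    (α ε : ℝ) (hα0 : 0 ≤ α) (hα1 : α ≤ 1) (hε : 0 ≤ ε)
    (hp : ∀ i, p i = (1 - α) * q i + α * r i)
    (D : Finset (Fin n))
    (hqratio : ∀ x ∈ D, ∀ y ∈ D, q y ≤ (1 + ε) * q x)
    (hrconst : ∀ x ∈ D, ∀ y ∈ D, r x = r y)
    (hpD : 0 < ∑ x ∈ D, p x) :
    (∀ x ∈ D, |p x / (∑ y ∈ D, p y) - 1 / D.card| ≤ ε / D.card) ∧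
      (∑ x ∈ D, |p x / (∑ y ∈ D, p y) - 1 / D.card|) ≤ ε ∧
      Real.sqrt (∑ x ∈ D, (p x / (∑ y ∈ D, p y) - 1 / D.card) ^ 2)
        ≤ ε / Real.sqrt D.card := by
  have hpratio : ∀ x ∈ D, ∀ y ∈ D, p y ≤ (1 + ε) * p x := by
    intro x hx y hy
    rw [hp x, hp y, hrconst y hy x hx]
    exact mixture_le_one_add_mul hα0 hα1 hε (hqratio x hx y hy) (hr.1 x)
  have hpointwise : ∀ x ∈ D, _ := fun _ hx => abs_div_sum_sub_inv_card_le hε hpD hpratio hx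
  exact ⟨hpointwise, sum_abs_le_of_forall_abs_le_div_card hε hpointwise,
    sqrt_sum_sq_le_of_forall_abs_le_div_card hε hpointwise⟩

/-- If `p = (1−α)q + αr`, `q` is positive and nearly-constant (within a
`(1+ε)` factor) on a nonempty set `D`, `r` is constant on `D`, and `p(D) > 0`, then
the restriction of `p` to `D` is pointwise within `ε/|D|` of uniform; hence its ℓ₁-
(resp. ℓ₂-) distance to the uniform distribution on `D` is at most `ε`
(resp. `ε/√|D|`). -/
theorem stmt14 {n : ℕ} (q r p : Fin n → ℝ)
    (hq : IsDist q) (hr : IsDist r)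
    (α ε : ℝ) (hα0 : 0 ≤ α) (hα1 : α ≤ 1) (hε : 0 ≤ ε)
    (hp : ∀ i, p i = (1 - α) * q i + α * r i)
    (D : Finset (Fin n)) (hD : D.Nonempty)
    (hqpos : ∀ x ∈ D, 0 < q x)
    (hqratio : ∀ x ∈ D, ∀ y ∈ D, q y ≤ (1 + ε) * q x)
    (hrconst : ∀ x ∈ D, ∀ y ∈ D, r x = r y)
    (hpD : 0 < ∑ x ∈ D, p x) :
    (∀ x ∈ D, |p x / (∑ y ∈ D, p y) - 1 / D.card| ≤ ε / D.card) ∧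
      (∑ x ∈ D, |p x / (∑ y ∈ D, p y) - 1 / D.card|) ≤ ε ∧
      Real.sqrt (∑ x ∈ D, (p x / (∑ y ∈ D, p y) - 1 / D.card) ^ 2)
        ≤ ε / Real.sqrt D.card :=
  stmt14_general q r p hr α ε hα0 hα1 hε hp D hqratio hrconst hpD
end

section
/- Let q and r be distributions over [n], let α ∈ [0,1], let ε′ > 0, and let q_α = (1−α)q + αr. Let D ⊆ [n] be nonempty and suppose: r is constant on D with common value b₀, q(x) ≤ ε′²/n for all x ∈ D, and α·b₀ ≥ ε′/n. Then q_α(D) > 0 and ∑_{x∈D} (q_α(x)/q_α(D) − 1/|D|)² ≤ ε′²/|D|; that is, the restriction of q_α to D is within ℓ₂-distance ε′/√|D| of the uniform distribution on D. -/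
open Finset

/-- Let `q_α = (1−α)q + αr`, let `D` be nonempty, let `r` be constant on
`D` with value `b₀`, `q(x) ≤ ε′²/n` on `D`, and `α·b₀ ≥ ε′/n`. Then `q_α(D) > 0` and
`∑_{x∈D} (q_α(x)/q_α(D) − 1/|D|)² ≤ ε′²/|D|`. -/
theorem stmt15 {n : ℕ} (q r qα : Fin n → ℝ)
    (hq : IsDist q) (hr : IsDist r)
    (α ε' : ℝ) (hα0 : 0 ≤ α) (hα1 : α ≤ 1) (hε' : 0 < ε')
    (hqα : ∀ i, qα i = (1 - α) * q i + α * r i)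
    (D : Finset (Fin n)) (hD : D.Nonempty)
    (b₀ : ℝ) (hrconst : ∀ x ∈ D, r x = b₀)
    (hqsmall : ∀ x ∈ D, q x ≤ ε' ^ 2 / n)
    (hαb : ε' / n ≤ α * b₀) :
    0 < ∑ x ∈ D, qα x ∧
      ∑ x ∈ D, (qα x / (∑ y ∈ D, qα y) - 1 / D.card) ^ 2 ≤ ε' ^ 2 / D.card := by
  obtain ⟨x₀, hx₀⟩ := hD
  have hn : 0 < (n : ℝ) := by
    have : 0 < n := x₀.pos
    exact_mod_cast this
  have hk : 0 < (D.card : ℝ) := by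
    have : 0 < D.card := Finset.card_pos.mpr ⟨x₀, hx₀⟩
    exact_mod_cast this
  set k : ℝ := (D.card : ℝ) with hkdef
  have hcpos : 0 < α * b₀ := lt_of_lt_of_le (by positivity) hαb
  -- rewrite the sum
  have hSeq : ∑ y ∈ D, qα y = (1 - α) * (∑ y ∈ D, q y) + k * (α * b₀) := by
    have : ∀ y ∈ D, qα y = (1 - α) * q y + α * b₀ := fun y hy => by
      rw [hqα y, hrconst y hy]
    rw [Finset.sum_congr rfl this, Finset.sum_add_distrib, ← Finset.mul_sum,
      Finset.sum_const, nsmul_eq_mul]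
  set Q : ℝ := ∑ y ∈ D, q y with hQdef
  have hQ0 : 0 ≤ Q := Finset.sum_nonneg fun y _ => hq.1 y
  have hQub : Q ≤ k * (ε' ^ 2 / n) := by
    calc Q ≤ ∑ _y ∈ D, ε' ^ 2 / n := Finset.sum_le_sum fun y hy => hqsmall y hy
    _ = k * (ε' ^ 2 / n) := by rw [Finset.sum_const]; push_cast; ring
  set S : ℝ := ∑ y ∈ D, qα y with hSdef
  have h1α : 0 ≤ 1 - α := by linarith
  have hSlb : k * (ε' / n) ≤ S := by
    rw [hSeq]
    have h1 : 0 ≤ (1 - α) * Q := mul_nonneg h1α hQ0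
    have h2 : k * (ε' / n) ≤ k * (α * b₀) := by
      apply mul_le_mul_of_nonneg_left hαb hk.le
    linarith
  have hSpos : 0 < S := lt_of_lt_of_le (by positivity) hSlb
  refine ⟨hSpos, ?_⟩
  have key : ∀ x ∈ D, (qα x / S - 1 / k) ^ 2 ≤ (ε' / k) ^ 2 := by
    intro x hx
    have hax0 : 0 ≤ (1 - α) * q x := mul_nonneg h1α (hq.1 x)
    have hax : (1 - α) * q x ≤ ε' ^ 2 / n := by
      have := hqsmall x hx
      nlinarith [hq.1 x]
    have hnum : k * qα x - S = (1 - α) * (k * q x - Q) := by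
      rw [hqα x, hrconst x hx, hSeq]; ring
    -- bound |k * qα x - S| ≤ ε' * S
    have hεS : k * (ε' ^ 2 / n) ≤ ε' * S := by
      have := mul_le_mul_of_nonneg_left hSlb hε'.le
      calc k * (ε' ^ 2 / n) = ε' * (k * (ε' / n)) := by ring
      _ ≤ ε' * S := this
    have hub : k * qα x - S ≤ ε' * S := by
      have : (1 - α) * (k * q x - Q) ≤ k * ((1 - α) * q x) := by nlinarith
      have h2 : k * ((1 - α) * q x) ≤ k * (ε' ^ 2 / n) :=
        mul_le_mul_of_nonneg_left hax hk.le
      linarith [hnum ▸ le_trans this (le_trans h2 hεS)]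
    have hlb : -(ε' * S) ≤ k * qα x - S := by
      have h1 : (1 - α) * Q ≤ k * (ε' ^ 2 / n) := by
        nlinarith
      have : -(k * (ε' ^ 2 / n)) ≤ (1 - α) * (k * q x - Q) := by nlinarith
      rw [hnum]; linarith
    have hrw : qα x / S - 1 / k = (k * qα x - S) / (k * S) := by
      field_simp
    rw [hrw]
    apply sq_le_sq'
    · rw [← neg_div, div_le_div_iff₀ hk (by positivity)]
      have := mul_le_mul_of_nonneg_right hlb hk.le
      linarith
    · rw [div_le_div_iff₀ (by positivity) hk]
      have := mul_le_mul_of_nonneg_right hub hk.le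
      linarith
  calc ∑ x ∈ D, (qα x / S - 1 / k) ^ 2 ≤ ∑ _x ∈ D, (ε' / k) ^ 2 :=
        Finset.sum_le_sum key
  _ = k * (ε' / k) ^ 2 := by rw [Finset.sum_const]; push_cast; ring
  _ = ε' ^ 2 / k := by field_simp
end

section
/- Let n be a positive integer divisible by 4, let 0 < ε ≤ 1/4, and set a = 4ε/n. Let B, C ⊆ [n] be disjoint subsets with |B| = |C| = n/4, and let p and q be distributions over [n] such that p(i) = a for i ∈ B, p(i) = 0 for i ∈ C, q(i) = 0 for i ∈ B, q(i) = a for i ∈ C, and p(i) = q(i) for all i ∉ B ∪ C. Then for every α ∈ [0,1], ∑_{i=1}^n |p(i) − ((1−α)q(i) + α/n)| ≥ ε; that is, p is ε-far in ℓ₁-distance from every mixture of q and the uniform distribution on [n]. -/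
open Finset

/-- With `4 ∣ n`, `0 < ε ≤ 1/4`, `a = 4ε/n`, disjoint `B, C ⊆ [n]` of size
`n/4`, `p = a·𝟙_B` and `q = a·𝟙_C` on `B ∪ C` (agreeing elsewhere), `p` is `ε`-far in
ℓ₁-distance from every mixture `(1−α)q + α𝒰` of `q` and the uniform distribution. -/
theorem stmt19 {n : ℕ} (hn : 0 < n) (hdiv : 4 ∣ n)
    (ε : ℝ) (hε0 : 0 < ε) (hε1 : ε ≤ 1 / 4)
    (a : ℝ) (ha : a = 4 * ε / n)
    (B C : Finset (Fin n)) (hBC : Disjoint B C)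
    (hB : B.card = n / 4) (hC : C.card = n / 4)
    (p q : Fin n → ℝ) (hp : IsDist p) (hq : IsDist q)
    (hpB : ∀ i ∈ B, p i = a) (hpC : ∀ i ∈ C, p i = 0)
    (hqB : ∀ i ∈ B, q i = 0) (hqC : ∀ i ∈ C, q i = a)
    (hout : ∀ i, i ∉ B → i ∉ C → p i = q i) :
    ∀ α : ℝ, 0 ≤ α → α ≤ 1 →
      ε ≤ ∑ i, |p i - ((1 - α) * q i + α * (1 / n))| := by
  intro α hα0 hα1
  obtain ⟨m, rfl⟩ := hdiv
  have hm : 0 < m := by omega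
  have hmR : (0:ℝ) < m := by exact_mod_cast hm
  have hnR : ((4 * m : ℕ) : ℝ) = 4 * m := by push_cast; ring
  have hcard : ((4 * m) / 4 : ℕ) = m := by omega
  have haR : a = ε / m := by rw [ha, hnR]; field_simp
  have ha0 : 0 ≤ a := by rw [haR]; positivity
  set u : ℝ := α * (1 / ((4 * m : ℕ) : ℝ)) with hu
  have hu0 : 0 ≤ u := by rw [hu, hnR]; positivity
  set f : Fin (4 * m) → ℝ := fun i => |p i - ((1 - α) * q i + u)| with hf
  have hsub : ∑ i ∈ B ∪ C, f i ≤ ∑ i, f i := by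
    apply Finset.sum_le_sum_of_subset_of_nonneg (Finset.subset_univ _)
    intro i _ _
    exact abs_nonneg _
  have hsplit : ∑ i ∈ B ∪ C, f i = ∑ i ∈ B, f i + ∑ i ∈ C, f i :=
    Finset.sum_union hBC
  have hBsum : ∑ i ∈ B, f i = m * |a - u| := by
    rw [Finset.sum_congr rfl (fun i hi => ?_), Finset.sum_const, hB, hcard, nsmul_eq_mul]
    simp [hf, hpB i hi, hqB i hi]
  have hCsum : ∑ i ∈ C, f i = m * ((1 - α) * a + u) := by
    rw [Finset.sum_congr rfl (fun i hi => ?_), Finset.sum_const, hC, hcard, nsmul_eq_mul]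
    simp only [hf, hpC i hi, hqC i hi]
    rw [zero_sub, abs_neg, abs_of_nonneg]
    nlinarith
  have habs : a - u ≤ |a - u| := le_abs_self _
  have hma : (m : ℝ) * a = ε := by rw [haR]; field_simp
  calc ε ≤ ∑ i ∈ B, f i + ∑ i ∈ C, f i := by
        rw [hBsum, hCsum]; nlinarith
    _ = ∑ i ∈ B ∪ C, f i := hsplit.symm
    _ ≤ ∑ i, f i := hsub
end
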